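/- arXiv:1902.09751 — 2 statements merged into one kernel-verified Lean document; each statement's English description precedes it below -/
import Mathlib

section
/- Let r(1) > 0, r'(1) < 0, D > 0, and for λ ≥ 0 define σ(λ) = -(r'(1)/(1+Dλ) + r(1))·λ. If r'(1) + r(1) < 0, then σ attains its maximum over λ ≥ 0 at λ* = (1/D)(√(-r'(1)/r(1)) - 1), and the maximum value equals σ_c = (1/D)(√(-r'(1)) - √(r(1)))². -/
/-!
Write `r(1) = t²` and `r'(1) = -s²` and `u = 1 + Dλ`. Then
`(s - t)² / D - σ(λ) = (s - t u)² / (D u)`,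
so `σ ≤ (s - t)² / D` on `λ ≥ 0`, with equality exactly when `u = s / t`, i.e. at `λ*`.
-/

noncomputable section

namespace DensitySuppressedMotility

variable {K : Type*} [Field K]

def growthRate (r1 rp D lam : K) : K := -(rp / (1 + D * lam) + r1) * lam

theorem sq_sub_div_sub_growthRate (s t D lam : K) (hD : D ≠ 0) (hu : 1 + D * lam ≠ 0) :
    (1 / D) * (s - t) ^ 2 - growthRate (t ^ 2) (-s ^ 2) D lam =
      (s - t * (1 + D * lam)) ^ 2 / (D * (1 + D * lam)) := by
  unfold growthRate
  field_simp
  ring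

theorem growthRate_le {r1 rp D lam : ℝ} (hr1 : 0 ≤ r1) (hrp : rp ≤ 0) (hD : 0 < D)
    (hlam : 0 ≤ lam) :
    growthRate r1 rp D lam ≤ (1 / D) * (√(-rp) - √r1) ^ 2 := by
  have hu : 0 < 1 + D * lam := by positivity
  have gap := sq_sub_div_sub_growthRate (√(-rp)) (√r1) D lam hD.ne' hu.ne'
  rw [Real.sq_sqrt hr1, Real.sq_sqrt (neg_nonneg.mpr hrp), neg_neg] at gap
  have : 0 ≤ (√(-rp) - √r1 * (1 + D * lam)) ^ 2 / (D * (1 + D * lam)) := by positivity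
  linarith

theorem growthRate_critical {r1 rp D : ℝ} (hr1 : 0 < r1) (hrp : rp < 0) (hD : D ≠ 0) :
    growthRate r1 rp D ((1 / D) * (√(-rp / r1) - 1)) = (1 / D) * (√(-rp) - √r1) ^ 2 := by
  set s := √(-rp)
  set t := √r1
  have hs : s ≠ 0 := (Real.sqrt_pos.mpr (neg_pos.mpr hrp)).ne'
  have ht : t ≠ 0 := (Real.sqrt_pos.mpr hr1).ne'
  have hu : 1 + D * ((1 / D) * (√(-rp / r1) - 1)) = s / t := by
    rw [Real.sqrt_div' _ hr1.le]
    field_simp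
    ring
  have gap := sq_sub_div_sub_growthRate s t D ((1 / D) * (√(-rp / r1) - 1)) hD
    (hu ▸ div_ne_zero hs ht)
  rw [Real.sq_sqrt hr1.le, Real.sq_sqrt (neg_nonneg.mpr hrp.le), neg_neg, hu,
    mul_div_cancel₀ s ht, sub_self, zero_pow two_ne_zero, zero_div] at gap
  exact (sub_eq_zero.mp gap).symm

end DensitySuppressedMotility

end

theorem sigma_max_general (r1 rp D : ℝ) (hr1 : 0 < r1) (hrp : rp < 0) (hD : 0 < D) :
    (∀ lam : ℝ, 0 ≤ lam →
      -(rp / (1 + D * lam) + r1) * lam ≤ (1 / D) * (Real.sqrt (-rp) - Real.sqrt r1) ^ 2) ∧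
    -(rp / (1 + D * ((1 / D) * (Real.sqrt (-rp / r1) - 1))) + r1) *
        ((1 / D) * (Real.sqrt (-rp / r1) - 1)) =
      (1 / D) * (Real.sqrt (-rp) - Real.sqrt r1) ^ 2 :=
  ⟨fun _ hlam => DensitySuppressedMotility.growthRate_le hr1.le hrp.le hD hlam,
    DensitySuppressedMotility.growthRate_critical hr1 hrp hD.ne'⟩

theorem sigma_max (r1 rp D : ℝ) (hr1 : 0 < r1) (hrp : rp < 0) (hD : 0 < D)
    (hsum : rp + r1 < 0) :
    (∀ lam : ℝ, 0 ≤ lam →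
      -(rp / (1 + D * lam) + r1) * lam ≤ (1 / D) * (Real.sqrt (-rp) - Real.sqrt r1) ^ 2) ∧
    -(rp / (1 + D * ((1 / D) * (Real.sqrt (-rp / r1) - 1))) + r1) *
        ((1 / D) * (Real.sqrt (-rp / r1) - 1)) =
      (1 / D) * (Real.sqrt (-rp) - Real.sqrt r1) ^ 2 :=
  sigma_max_general r1 rp D hr1 hrp hD
end

section
/- Let r(1) > 0, r'(1) < 0, D > 0 with r'(1) + r(1) < 0, and let σ_c = (1/D)(√(-r'(1)) - √(r(1)))². Then for every σ > σ_c and every λ ≥ 0, σ + (r'(1)/(1+Dλ) + r(1))λ > 0. -/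
theorem stable_above_sigma_c (r1 rp D : ℝ) (hr1 : 0 < r1) (hrp : rp < 0) (hD : 0 < D)
    (hsum : rp + r1 < 0) :
    ∀ sigma : ℝ, sigma > (1 / D) * (Real.sqrt (-rp) - Real.sqrt r1) ^ 2 →
      ∀ lam : ℝ, 0 ≤ lam → 0 < sigma + (rp / (1 + D * lam) + r1) * lam := by
  intro sigma hs lam hl
  have hd : 0 < 1 + D * lam := by nlinarith
  set a := Real.sqrt (-rp) with haa
  set b := Real.sqrt r1 with hbb
  have hrp' : rp = -a ^ 2 := by
    rw [haa, Real.sq_sqrt (by linarith)]; ring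
  have hr1' : r1 = b ^ 2 := by
    rw [hbb, Real.sq_sqrt (by linarith)]
  have heq : D * (1 + D * lam) *
      ((1 / D) * (a - b) ^ 2 + (rp / (1 + D * lam) + r1) * lam)
      = ((a - b) - b * (D * lam)) ^ 2 := by
    rw [hrp', hr1']
    field_simp
    ring
  have hkey : 0 ≤ (1 / D) * (a - b) ^ 2 + (rp / (1 + D * lam) + r1) * lam := by
    nlinarith [sq_nonneg ((a - b) - b * (D * lam)), heq, mul_pos hD hd]
  linarith
end
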